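/- arXiv:1211.0658 — 2 statements merged into one kernel-verified Lean document; each statement's English description precedes it below -/
import Mathlib

section
/- Let 1 ≤ k₋ < k₊ be integers such that p := k₊+k₋ is an odd prime, let n ≥ 1 be an integer such that q := (k₊+k₋)n+1 is prime, and suppose there exists a splitting ℤ_q = (M,S) with multiplier set M = [-k₋,k₊]* = {m ∈ ℤ : -k₋ ≤ m ≤ k₊, m ≠ 0} and |S| = n. Then (k₊+k₋) divides n. -/
/-!
Let `χ` be a multiplicative character of `ℤ_q` of order `p = k₊ + k₋` (it exists since `p ∣ q - 1`).
Since `χ` is nontrivial, `0 = ∑ₐ χ a = (∑_{m ∈ M} χ m) (∑_{s ∈ S} χ s)` by the splitting property.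
The values of `χ` on units are `p`-th roots of unity, and the only rational relation among
`1, ζ, …, ζ^{p-1}` is `1 + ζ + ⋯ + ζ^{p-1} = 0`, so a vanishing sum of `p`-th roots of unity takes
every value equally often; in particular its number of terms is divisible by `p`. The first factor
cannot vanish: it has exactly `p` terms, yet `χ 1 = χ (-1) = 1` as `p` is odd. Hence the second
factor vanishes and `p ∣ |S| = n`.
-/

/-- `(M, S)` is a splitting of `ℤ_q`: `M ⊆ ℤ \ {0}`, and the products `m·s`
(for `m ∈ M`, `s ∈ S`) are pairwise distinct and cover exactly the nonzero
elements of `ZMod q`. -/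
def IsSplitting (q : ℕ) (M : Finset ℤ) (S : Finset (ZMod q)) : Prop :=
  (0 : ℤ) ∉ M ∧
  Set.InjOn (fun p : ℤ × ZMod q => (p.1 : ZMod q) * p.2) ↑(M ×ˢ S) ∧
  (fun p : ℤ × ZMod q => (p.1 : ZMod q) * p.2) '' ↑(M ×ˢ S) = {a : ZMod q | a ≠ 0}

open Polynomial Finset

theorem IsPrimitiveRoot.eq_of_sum_mul_pow_eq_zero {K : Type*} [Field K] [CharZero K] {p : ℕ}
    [hp : Fact p.Prime] {ζ : K} (hζ : IsPrimitiveRoot ζ p) {c : ℕ → ℚ}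
    (h : ∑ j ∈ range p, (c j : K) * ζ ^ j = 0) {j : ℕ} (hj : j < p) : c j = c 0 := by
  set Q : ℚ[X] := ∑ j ∈ range p, C (c j) * X ^ j
  have hQ_coeff : ∀ i < p, Q.coeff i = c i := fun i hi => by
    simp [Q, coeff_C_mul, coeff_X_pow, hi]
  obtain ⟨R, hR⟩ : cyclotomic p ℚ ∣ Q := by
    rw [cyclotomic_eq_minpoly_rat hζ hp.out.pos]
    refine minpoly.dvd ℚ ζ ?_
    simpa [Q, map_sum] using h
  have hR_deg : R.natDegree = 0 := by
    have hQ_deg : Q.natDegree ≤ p - 1 :=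
      natDegree_sum_le_of_forall_le _ _ fun i hi =>
        (natDegree_C_mul_X_pow_le _ _).trans (by have := mem_range.mp hi; omega)
    have hdiv := natDegree_divByMonic Q (cyclotomic.monic p ℚ)
    rw [natDegree_cyclotomic, Nat.totient_prime hp.out] at hdiv
    conv_lhs at hdiv => rw [hR, mul_divByMonic_cancel_left _ (cyclotomic.monic p ℚ)]
    omega
  have hcoeff : ∀ i < p, (cyclotomic p ℚ * C (R.coeff 0)).coeff i = R.coeff 0 := fun i hi => by
    simp [cyclotomic_prime, coeff_mul_C, finsetSum_coeff, coeff_X_pow, hi]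
  rw [← hQ_coeff j hj, ← hQ_coeff 0 hp.out.pos, hR, eq_C_of_natDegree_eq_zero hR_deg,
    hcoeff j hj, hcoeff 0 hp.out.pos]

theorem IsPrimitiveRoot.card_eq_mul_card_filter_eq_one {α K : Type*} [Field K] [CharZero K]
    [DecidableEq K] {p : ℕ} [Fact p.Prime] {ζ : K} (hζ : IsPrimitiveRoot ζ p) {T : Finset α}
    {g : α → K} (hg : ∀ x ∈ T, g x ^ p = 1) (hsum : ∑ x ∈ T, g x = 0) :
    #T = p * #{x ∈ T | g x = 1} := by
  have hmaps : ∀ x ∈ T, g x ∈ (range p).image (ζ ^ ·) := fun x hx => by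
    obtain ⟨i, hi, hζi⟩ := hζ.eq_pow_of_pow_eq_one (hg x hx)
    exact mem_image.mpr ⟨i, mem_range.mpr hi, hζi⟩
  have hinj : Set.InjOn (ζ ^ ·) (range p) := fun i hi j hj hij =>
    hζ.pow_inj (mem_range.mp hi) (mem_range.mp hj) hij
  have hfibres : ∑ j ∈ range p, ((#{x ∈ T | g x = ζ ^ j} : ℚ) : K) * ζ ^ j = 0 := by
    rw [← hsum, ← sum_fiberwise_of_maps_to hmaps, sum_image hinj]
    refine sum_congr rfl fun j _ => ?_
    rw [sum_congr rfl fun x hx => (mem_filter.mp hx).2]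
    simp
  have hc : ∀ j ∈ range p, #{x ∈ T | g x = ζ ^ j} = #{x ∈ T | g x = 1} := fun j hj => by
    simpa using hζ.eq_of_sum_mul_pow_eq_zero hfibres (mem_range.mp hj)
  rw [card_eq_sum_card_fiberwise hmaps, sum_image hinj, sum_congr rfl hc, sum_const, card_range,
    smul_eq_mul]

theorem MulChar.apply_pow_eq_one_of_pow_eq_one {R R' : Type*} [CommMonoidWithZero R]
    [CommMonoidWithZero R'] {χ : MulChar R R'} {n : ℕ} (hχ : χ ^ n = 1) {a : R} (ha : IsUnit a) :
    χ a ^ n = 1 := by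
  rcases eq_or_ne n 0 with rfl | hn
  · exact pow_zero _
  · rw [← χ.pow_apply' hn, hχ, MulChar.one_apply ha]

namespace IsSplitting

variable {q : ℕ} {M : Finset ℤ} {S : Finset (ZMod q)}

theorem mul_ne_zero (h : IsSplitting q M S) {m : ℤ} (hm : m ∈ M) {s : ZMod q} (hs : s ∈ S) :
    (m : ZMod q) * s ≠ 0 :=
  show (m : ZMod q) * s ∈ {a : ZMod q | a ≠ 0} from h.2.2 ▸ ⟨(m, s), mk_mem_product hm hs, rfl⟩

theorem image_mul_eq_erase_zero [NeZero q] (h : IsSplitting q M S) :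
    (M ×ˢ S).image (fun p : ℤ × ZMod q => (p.1 : ZMod q) * p.2) = univ.erase 0 := by
  apply Finset.coe_injective
  rw [coe_image, h.2.2, coe_erase, coe_univ]
  ext
  simp

theorem sum_mulChar_eq_mul [NeZero q] [Nontrivial (ZMod q)] (h : IsSplitting q M S)
    {R : Type*} [CommRing R] (χ : MulChar (ZMod q) R) :
    ∑ a, χ a = (∑ m ∈ M, χ m) * ∑ s ∈ S, χ s := by
  rw [← add_sum_erase _ _ (mem_univ 0), MulChar.map_zero, zero_add, ← h.image_mul_eq_erase_zero,
    sum_image fun x hx y hy hxy => h.2.1 (mem_coe.mpr hx) (mem_coe.mpr hy) hxy, sum_mul_sum,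
    sum_product]
  simp only [map_mul]

end IsSplitting

theorem MulChar.sum_intCast_ne_zero {F K : Type*} [Field F] [Field K] [CharZero K]
    {p : ℕ} [Fact p.Prime] (hp : Odd p) {ζ : K} (hζ : IsPrimitiveRoot ζ p) {χ : MulChar F K}
    (hχ : χ ^ p = 1) {T : Finset ℤ} (hT : #T = p) (hT0 : ∀ m ∈ T, (m : F) ≠ 0) (h1 : 1 ∈ T)
    (hneg1 : -1 ∈ T) : ∑ m ∈ T, χ m ≠ 0 := by
  classical
  intro hsum
  have hfibre := hζ.card_eq_mul_card_filter_eq_one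
    (fun m hm => χ.apply_pow_eq_one_of_pow_eq_one hχ (hT0 m hm).isUnit) hsum
  have hsub : ({-1, 1} : Finset ℤ) ⊆ {m ∈ T | χ ((m : ℤ) : F) = 1} := by
    simp [insert_subset_iff, h1, hneg1, χ.val_neg_one_eq_one_of_odd_order hp hχ]
  have hcard : #{m ∈ T | χ ((m : ℤ) : F) = 1} = 1 :=
    (Nat.mul_eq_left (Fact.out : p.Prime).ne_zero).mp (hT ▸ hfibre).symm
  simpa [hcard] using card_le_card hsub

theorem Int.card_Icc_neg_erase_zero (a b : ℕ) : #((Icc (-(a : ℤ)) b).erase 0) = b + a := by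
  rw [card_erase_of_mem (by simp), Int.card_Icc]
  omega

theorem stmt_6 (kp km n : ℕ) (hkm : 1 ≤ km) (hk : km < kp) (hn : 1 ≤ n)
    (hpodd : Odd (kp + km)) (hpprime : Nat.Prime (kp + km))
    (hq : Nat.Prime ((kp + km) * n + 1))
    (S : Finset (ZMod ((kp + km) * n + 1)))
    (hsplit : IsSplitting ((kp + km) * n + 1)
        ((Finset.Icc (-(km : ℤ)) (kp : ℤ)).erase 0) S)
    (hcard : S.card = n) :
    (kp + km) ∣ n := by
  have := Fact.mk hpprime
  have := Fact.mk hq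
  set M := (Icc (-(km : ℤ)) kp).erase 0
  have h1 : 1 ∈ M := mem_erase.mpr ⟨one_ne_zero, mem_Icc.mpr ⟨by omega, by omega⟩⟩
  have hneg1 : -1 ∈ M := mem_erase.mpr ⟨by norm_num, mem_Icc.mpr ⟨by omega, by omega⟩⟩
  obtain ⟨ζ, hζ⟩ : ∃ ζ : ℂ, IsPrimitiveRoot ζ (kp + km) :=
    ⟨_, Complex.isPrimitiveRoot_exp _ hpprime.ne_zero⟩
  obtain ⟨χ, hχ⟩ := MulChar.exists_mulChar_orderOf (ZMod ((kp + km) * n + 1)) (by simp) hζ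
  have hχ_pow : χ ^ (kp + km) = 1 := by rw [← pow_orderOf_eq_one χ, hχ]
  have hχ_ne : χ ≠ 1 := fun h => by simp [h, hpprime.ne_one.symm] at hχ
  obtain ⟨s₀, hs₀⟩ : S.Nonempty := card_pos.mp (by omega)
  have hM_ne : ∑ m ∈ M, χ m ≠ 0 :=
    MulChar.sum_intCast_ne_zero hpodd hζ hχ_pow (Int.card_Icc_neg_erase_zero km kp)
      (fun m hm => left_ne_zero_of_mul (hsplit.mul_ne_zero hm hs₀)) h1 hneg1
  have hS_zero : ∑ s ∈ S, χ s = 0 := by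
    have := hsplit.sum_mulChar_eq_mul χ
    rwa [MulChar.sum_eq_zero_of_ne_one hχ_ne, eq_comm, mul_eq_zero, or_iff_right hM_ne] at this
  have hS_pow : ∀ s ∈ S, χ s ^ (kp + km) = 1 := fun s hs =>
    χ.apply_pow_eq_one_of_pow_eq_one hχ_pow
      (right_ne_zero_of_mul (hsplit.mul_ne_zero h1 hs)).isUnit
  rw [← hcard, hζ.card_eq_mul_card_filter_eq_one hS_pow hS_zero]
  exact dvd_mul_right _ _
end

section
/- Let n ≥ 1 be an integer satisfying n ≡ 5 or 9 (mod 12), or n ≡ 4 or 10 (mod 18), or n ≡ 15 or 23 (mod 24). Then there is no splitting ℤ_{5n+1} = (M,S) with |S| = n for M = {-2,-1,1,2,3}, and also none for M = {-1,1,2,3,4}. (Equivalently, neither the (3,2,n)-quasi-cross nor the (4,1,n)-quasi-cross lattice tiles ℝⁿ for such n.) -/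
open Finset

theorem ZMod.card_filter_castHom_eq_zero {q d : ℕ} [NeZero q] (hd : d ∣ q) :
    #{a : ZMod q | ZMod.castHom hd (ZMod d) a = 0} = q / d := by
  set π := (ZMod.castHom hd (ZMod d)).toAddMonoidHom
  have hker : Nat.card π.ker * d = q := calc
    Nat.card π.ker * d = Nat.card π.ker * π.ker.index := by
      rw [AddSubgroup.index_ker, AddMonoidHom.range_eq_top.2 (ZMod.ringHom_surjective _),
        AddSubgroup.card_top, Nat.card_zmod]
    _ = q := by rw [π.ker.card_mul_index, Nat.card_zmod]
  have hd0 : d ≠ 0 := by rintro rfl; exact NeZero.ne q (by simpa using hker.symm)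
  rw [← Nat.eq_div_of_mul_eq_left hd0 hker, ← Fintype.card_subtype, Nat.card_eq_fintype_card]
  exact Fintype.card_congr (Equiv.refl _)

namespace IsSplitting

variable {q : ℕ} [NeZero q] {M : Finset ℤ} {S : Finset (ZMod q)}

theorem card_filter_ne_zero (h : IsSplitting q M S) (P : ZMod q → Prop) [DecidablePred P] :
    #{a : ZMod q | a ≠ 0 ∧ P a} = ∑ m ∈ M, #{s ∈ S | P (m * s)} := by
  obtain ⟨-, hinj, himg⟩ := h
  set f : ℤ × ZMod q → ZMod q := fun z => (z.1 : ZMod q) * z.2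
  have himg' : (M ×ˢ S).image f = ({a | a ≠ 0} : Finset (ZMod q)) := by
    rw [← coe_inj, coe_image, himg, coe_filter]
    simp
  calc #{a : ZMod q | a ≠ 0 ∧ P a}
      = #{a ∈ (M ×ˢ S).image f | P a} := by rw [himg', filter_filter]
    _ = #{z ∈ M ×ˢ S | P (f z)} := by
      rw [filter_image, card_image_of_injOn (hinj.mono (coe_subset.2 (filter_subset _ _)))]
    _ = ∑ m ∈ M, #{s ∈ S | P (m * s)} := by
      simp only [card_filter, sum_product, f]

theorem div_sub_one_eq {p : ℕ} [Fact p.Prime] (hp : p ∣ q) (h : IsSplitting q M S) :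
    q / p - 1 = #{m ∈ M | (p : ℤ) ∣ m} * #S +
      #{m ∈ M | ¬(p : ℤ) ∣ m} * #{s ∈ S | ZMod.castHom hp (ZMod p) s = 0} := by
  set π := ZMod.castHom hp (ZMod p)
  have hmul (m : ℤ) (s : ZMod q) : π (m * s) = 0 ↔ (p : ℤ) ∣ m ∨ π s = 0 := by
    rw [map_mul, map_intCast, mul_eq_zero, ZMod.intCast_zmod_eq_zero_iff_dvd]
  have hcount : #{a : ZMod q | a ≠ 0 ∧ π a = 0} = q / p - 1 := by
    rw [← ZMod.card_filter_castHom_eq_zero hp,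
      ← card_erase_of_mem (s := {a : ZMod q | π a = 0}) (a := 0) (by simp), ← filter_ne',
      filter_filter]
    simp only [and_comm]
  rw [← hcount, h.card_filter_ne_zero, ← sum_filter_add_sum_filter_not M ((p : ℤ) ∣ ·),
    sum_const_nat (m := #S), sum_const_nat (m := #{s ∈ S | π s = 0})]
  · intro m hm
    rw [mem_filter] at hm
    simp only [hmul, hm.2, false_or]
  · intro m hm
    rw [mem_filter] at hm
    simp only [hmul, hm.2, true_or, filter_true]

theorem mod_six_eq_one_of_odd {n : ℕ} {M : Finset ℤ} {S : Finset (ZMod (5 * n + 1))}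
    (h : IsSplitting (5 * n + 1) M S) (hS : #S = n) (hM : #{m ∈ M | 2 ∣ m} = 2)
    (hM' : #{m ∈ M | ¬2 ∣ m} = 3) (hn : n % 2 = 1) : n % 6 = 1 := by
  have := h.div_sub_one_eq (p := 2) (by omega)
  push_cast at this
  rw [hM, hM', hS] at this
  omega

theorem mod_six_eq_one_of_mod_three {n : ℕ} {M : Finset ℤ}
    {S : Finset (ZMod (5 * n + 1))} (h : IsSplitting (5 * n + 1) M S) (hS : #S = n)
    (hM : #{m ∈ M | 3 ∣ m} = 1) (hM' : #{m ∈ M | ¬3 ∣ m} = 4) (hn : n % 3 = 1) :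
    n % 6 = 1 := by
  have := h.div_sub_one_eq (p := 3) (by omega)
  push_cast at this
  rw [hM, hM', hS] at this
  omega

end IsSplitting

theorem not_exists_isSplitting {n : ℕ}
    (hmod : n % 12 = 5 ∨ n % 12 = 9 ∨ n % 18 = 4 ∨ n % 18 = 10 ∨
      n % 24 = 15 ∨ n % 24 = 23)
    {M : Finset ℤ} (h2 : #{m ∈ M | 2 ∣ m} = 2) (h2' : #{m ∈ M | ¬2 ∣ m} = 3)
    (h3 : #{m ∈ M | 3 ∣ m} = 1) (h3' : #{m ∈ M | ¬3 ∣ m} = 4) :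
    ¬∃ S : Finset (ZMod (5 * n + 1)), IsSplitting (5 * n + 1) M S ∧ #S = n := by
  rintro ⟨S, hS, hcard⟩
  by_cases hn : n % 2 = 1
  · have := hS.mod_six_eq_one_of_odd hcard h2 h2' hn
    omega
  · have := hS.mod_six_eq_one_of_mod_three hcard h3 h3' (by omega)
    omega

theorem stmt_12_general (n : ℕ)
    (hmod : n % 12 = 5 ∨ n % 12 = 9 ∨ n % 18 = 4 ∨ n % 18 = 10 ∨
            n % 24 = 15 ∨ n % 24 = 23) :
    (¬ ∃ S : Finset (ZMod (5 * n + 1)),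
        IsSplitting (5 * n + 1) ({-2, -1, 1, 2, 3} : Finset ℤ) S ∧ S.card = n) ∧
    (¬ ∃ S : Finset (ZMod (5 * n + 1)),
        IsSplitting (5 * n + 1) ({-1, 1, 2, 3, 4} : Finset ℤ) S ∧ S.card = n) :=
  ⟨not_exists_isSplitting hmod (by decide) (by decide) (by decide) (by decide),
    not_exists_isSplitting hmod (by decide) (by decide) (by decide) (by decide)⟩

theorem stmt_12 (n : ℕ) (hn : 1 ≤ n)
    (hmod : n % 12 = 5 ∨ n % 12 = 9 ∨ n % 18 = 4 ∨ n % 18 = 10 ∨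
            n % 24 = 15 ∨ n % 24 = 23) :
    (¬ ∃ S : Finset (ZMod (5 * n + 1)),
        IsSplitting (5 * n + 1) ({-2, -1, 1, 2, 3} : Finset ℤ) S ∧ S.card = n) ∧
    (¬ ∃ S : Finset (ZMod (5 * n + 1)),
        IsSplitting (5 * n + 1) ({-1, 1, 2, 3, 4} : Finset ℤ) S ∧ S.card = n) :=
  stmt_12_general n hmod
end
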